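/- arXiv:1101.0223 — 3 statements merged into one kernel-verified Lean document; each statement's English description precedes it below -/
import Mathlib

section
/- For the functions a(k,l) = 1/4 + l + √2·k and b(k,l) = 1/3 + k − √2·l on ℤ × ℤ, all the absolute values |a(k,l)| and |b(k,l)| are nonzero and pairwise distinct: for all (k,l), (k',l') ∈ ℤ × ℤ one has a(k,l) ≠ 0, b(k,l) ≠ 0; |a(k,l)| = |a(k',l')| implies (k,l) = (k',l'); |b(k,l)| = |b(k',l')| implies (k,l) = (k',l'); and |a(k,l)| ≠ |b(k',l')| always. (Thus the edge weights of this harmonic vector on the square-grid map ℤ² are the side lengths of squares that are all different.) -/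
/-!
Since `√2` is irrational, a real number `m + √2 n` with `m n : ℤ` determines `m` and `n`, so
`|x| = |y|` for two such numbers forces `x = ±y` coefficientwise. Scaled by `12`, the weights
`a(k, l)` and `b(k, l)` have integer parts `12 l + 3` and `12 k + 4`; the residues
`3, -3, 4, -4, 0` being distinct mod `12` gives all the claims.
-/

/-- The weight of the horizontal edge at `(k, l)` in the square-grid plane map `ℤ²`. -/
noncomputable def aWeight (k l : ℤ) : ℝ := 1/4 + l + Real.sqrt 2 * k

/-- The weight of the vertical edge at `(k, l)` in the square-grid plane map `ℤ²`. -/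
noncomputable def bWeight (k l : ℤ) : ℝ := 1/3 + k - Real.sqrt 2 * l

namespace Irrational

variable {α : ℝ} {m n m' n' : ℤ}

theorem intCast_add_mul_inj (hα : Irrational α) (h : (m : ℝ) + α * n = m' + α * n') :
    m = m' ∧ n = n' := by
  obtain rfl : n = n' := by
    by_contra hn
    refine (hα.mul_intCast (sub_ne_zero.mpr hn)).ne_int (m' - m) ?_
    push_cast
    linarith
  exact ⟨by exact_mod_cast add_right_cancel h, rfl⟩

theorem intCast_add_mul_eq_zero (hα : Irrational α) (h : (m : ℝ) + α * n = 0) :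
    m = 0 ∧ n = 0 :=
  hα.intCast_add_mul_inj (by simpa using h)

theorem abs_intCast_add_mul_inj (hα : Irrational α)
    (h : |(m : ℝ) + α * n| = |(m' : ℝ) + α * n'|) :
    (m = m' ∧ n = n') ∨ (m = -m' ∧ n = -n') := by
  rcases abs_eq_abs.mp h with h | h
  · exact .inl (hα.intCast_add_mul_inj h)
  · refine .inr (hα.intCast_add_mul_inj ?_)
    push_cast
    linarith

end Irrational

section Weights

variable (k l k' l' : ℤ)

theorem twelve_mul_aWeight :
    12 * aWeight k l = ((12 * l + 3 : ℤ) : ℝ) + √2 * ((12 * k : ℤ) : ℝ) := by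
  unfold aWeight
  push_cast
  ring

theorem twelve_mul_bWeight :
    12 * bWeight k l = ((12 * k + 4 : ℤ) : ℝ) + √2 * ((-12 * l : ℤ) : ℝ) := by
  unfold bWeight
  push_cast
  ring

variable {k l k' l'}

theorem abs_twelve_mul_eq {x y : ℝ} (h : |x| = |y|) : |12 * x| = |12 * y| := by
  rw [abs_mul, abs_mul, h]

theorem aWeight_ne_zero : aWeight k l ≠ 0 := fun h => by
  have := irrational_sqrt_two.intCast_add_mul_eq_zero
    (by rw [← twelve_mul_aWeight, h, mul_zero])
  omega

theorem bWeight_ne_zero : bWeight k l ≠ 0 := fun h => by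
  have := irrational_sqrt_two.intCast_add_mul_eq_zero
    (by rw [← twelve_mul_bWeight, h, mul_zero])
  omega

theorem abs_aWeight_inj (h : |aWeight k l| = |aWeight k' l'|) : (k, l) = (k', l') := by
  have h12 := abs_twelve_mul_eq h
  rw [twelve_mul_aWeight, twelve_mul_aWeight] at h12
  have := irrational_sqrt_two.abs_intCast_add_mul_inj h12
  rw [Prod.ext_iff]
  omega

theorem abs_bWeight_inj (h : |bWeight k l| = |bWeight k' l'|) : (k, l) = (k', l') := by
  have h12 := abs_twelve_mul_eq h
  rw [twelve_mul_bWeight, twelve_mul_bWeight] at h12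
  have := irrational_sqrt_two.abs_intCast_add_mul_inj h12
  rw [Prod.ext_iff]
  omega

theorem abs_aWeight_ne_abs_bWeight : |aWeight k l| ≠ |bWeight k' l'| := fun h => by
  have h12 := abs_twelve_mul_eq h
  rw [twelve_mul_aWeight, twelve_mul_bWeight] at h12
  have := irrational_sqrt_two.abs_intCast_add_mul_inj h12
  omega

end Weights

/-- All the absolute values `|a(k,l)|` and `|b(k,l)|` are nonzero and pairwise distinct:
the edge weights of this harmonic vector on the square-grid map `ℤ²` are the side lengths
of squares that are all different. -/
theorem aWeight_bWeight_all_distinct :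
    ∀ k l k' l' : ℤ,
      aWeight k l ≠ 0 ∧
      bWeight k l ≠ 0 ∧
      (|aWeight k l| = |aWeight k' l'| → (k, l) = (k', l')) ∧
      (|bWeight k l| = |bWeight k' l'| → (k, l) = (k', l')) ∧
      |aWeight k l| ≠ |bWeight k' l'| :=
  fun _ _ _ _ => ⟨aWeight_ne_zero, bWeight_ne_zero, abs_aWeight_inj, abs_bWeight_inj,
    abs_aWeight_ne_abs_bWeight⟩
end

section
/- Let (a,b) be a harmonic vector on the square-grid plane map ℤ² and suppose there exist integers N ≥ 1 and M ≥ 1 such that a(k+N,l) = a(k,l), a(k,l+M) = a(k,l), b(k+N,l) = b(k,l) and b(k,l+M) = b(k,l) for all k, l ∈ ℤ. Then a and b are constant functions. Consequently, the space of harmonic vectors on the grid that are periodic with respect to some finite-index sublattice of ℤ² equals the space of constant pairs (a ≡ s, b ≡ t), s, t ∈ ℝ, and is 2-dimensional. -/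
/-!
Eliminating `b` from (V) and (F) shows that `a` is discrete harmonic: each value `a k l` is the
mean of its four neighbours. A doubly periodic function takes only finitely many values, so `a`
attains its maximum, and by the mean value property the set where the maximum is attained is
closed under unit steps; hence `a` is constant. With `a` constant, (F) and (V) say that `b` is
invariant under unit steps, so `b` is constant too.
-/

/-- A harmonic vector on the square-grid plane map `ℤ²`: a pair of edge-weight functions
(horizontal weights `a`, vertical weights `b`) satisfying the vertex equation (V) and the
face equation (F) at every `(k, l)`. -/
def IsGridHarmonic (a b : ℤ → ℤ → ℝ) : Prop :=
  ∀ k l : ℤ,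
    (a k l - a (k - 1) l + b k l - b k (l - 1) = 0) ∧
    (a k l + b (k + 1) l - a k (l + 1) - b k l = 0)

def constPair : (ℝ × ℝ) →ₗ[ℝ] ((ℤ → ℤ → ℝ) × (ℤ → ℤ → ℝ)) where
  toFun st := ((fun _ _ => st.1), (fun _ _ => st.2))
  map_add' := by intros; rfl
  map_smul' := by intros; rfl

open Function

theorem exists_forall_le_of_periodic {α : Type*} [LinearOrder α] {f : ℤ → ℤ → α} {N M : ℤ}
    (hN : 0 < N) (hM : 0 < M) (hfN : ∀ l, Periodic (f · l) N) (hfM : ∀ k, Periodic (f k) M) :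
    ∃ k₀ l₀, ∀ k l, f k l ≤ f k₀ l₀ := by
  obtain ⟨⟨k₀, l₀⟩, -, hmax⟩ :=
    (Finset.Ico 0 N ×ˢ Finset.Ico 0 M).exists_max_image (fun p => f p.1 p.2)
      ⟨(0, 0), Finset.mem_product.2 ⟨Finset.mem_Ico.2 ⟨le_rfl, hN⟩, Finset.mem_Ico.2 ⟨le_rfl, hM⟩⟩⟩
  refine ⟨k₀, l₀, fun k l => ?_⟩
  obtain ⟨k', hk', hk⟩ := (hfN l).exists_mem_Ico₀ hN k
  obtain ⟨l', hl', hl⟩ := (hfM k').exists_mem_Ico₀ hM l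
  rw [hk, hl]
  exact hmax (k', l') (by simpa using And.intro hk' hl')

theorem forall_of_closed_under_unit_steps {P : ℤ → ℤ → Prop} {k₀ l₀ : ℤ} (h₀ : P k₀ l₀)
    (hk : ∀ k l, P k l → P (k + 1) l ∧ P (k - 1) l)
    (hl : ∀ k l, P k l → P k (l + 1) ∧ P k (l - 1)) :
    ∀ k l, P k l := by
  intro k l
  have hrow : P k l₀ :=
    Int.inductionOn' k k₀ h₀ (fun k _ h => (hk k l₀ h).1) (fun k _ h => (hk k l₀ h).2)
  exact Int.inductionOn' l l₀ hrow (fun l _ h => (hl k l h).1) (fun l _ h => (hl k l h).2)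

theorem eq_of_mean_value_of_forall_le {f : ℤ → ℤ → ℝ}
    (hmean : ∀ k l, f (k + 1) l + f (k - 1) l + f k (l + 1) + f k (l - 1) = 4 * f k l)
    {k₀ l₀ : ℤ} (hmax : ∀ k l, f k l ≤ f k₀ l₀) :
    ∀ k l, f k l = f k₀ l₀ := by
  have hneighbours : ∀ k l, f k l = f k₀ l₀ →
      (f (k + 1) l = f k₀ l₀ ∧ f (k - 1) l = f k₀ l₀) ∧
        (f k (l + 1) = f k₀ l₀ ∧ f k (l - 1) = f k₀ l₀) := by
    intro k l hkl
    have := hmean k l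
    have := hmax (k + 1) l
    have := hmax (k - 1) l
    have := hmax k (l + 1)
    have := hmax k (l - 1)
    exact ⟨⟨by linarith, by linarith⟩, ⟨by linarith, by linarith⟩⟩
  exact forall_of_closed_under_unit_steps rfl (fun k l h => (hneighbours k l h).1)
    (fun k l h => (hneighbours k l h).2)

theorem eq_of_periodic_one {α : Type*} {f : ℤ → ℤ → α} (hk : ∀ l, Periodic (f · l) 1)
    (hl : ∀ k, Periodic (f k) 1) (k l : ℤ) : f k l = f 0 0 := by
  have hrow := (hk l).int_mul_eq k
  have hcol := (hl 0).int_mul_eq l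
  simp only [Int.cast_id, mul_one] at hrow hcol
  exact hrow.trans hcol

namespace IsGridHarmonic

variable {a b : ℤ → ℤ → ℝ}

theorem mean_value_fst (h : IsGridHarmonic a b) (k l : ℤ) :
    a (k + 1) l + a (k - 1) l + a k (l + 1) + a k (l - 1) = 4 * a k l := by
  have hV := (h (k + 1) l).1
  have hV' := (h k l).1
  have hF := (h k l).2
  have hF' := (h k (l - 1)).2
  simp only [add_sub_cancel_right, sub_add_cancel] at hV hF'
  linarith

theorem fst_eq_const_of_periodic (h : IsGridHarmonic a b) {N M : ℤ} (hN : 0 < N) (hM : 0 < M)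
    (haN : ∀ l, Periodic (a · l) N) (haM : ∀ k, Periodic (a k) M) :
    ∃ s, ∀ k l, a k l = s := by
  obtain ⟨k₀, l₀, hmax⟩ := exists_forall_le_of_periodic hN hM haN haM
  exact ⟨a k₀ l₀, eq_of_mean_value_of_forall_le h.mean_value_fst hmax⟩

theorem snd_eq_const_of_fst_eq_const (h : IsGridHarmonic a b) {s : ℝ} (ha : ∀ k l, a k l = s)
    (k l : ℤ) : b k l = b 0 0 := by
  refine eq_of_periodic_one (fun l k => ?_) (fun k l => ?_) k l
  · have hF := (h k l).2
    rw [ha, ha] at hF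
    linarith
  · have hV := (h k (l + 1)).1
    rw [ha, ha, add_sub_cancel_right] at hV
    linarith

theorem exists_const_of_fst_periodic (h : IsGridHarmonic a b) {N M : ℤ} (hN : 0 < N)
    (hM : 0 < M) (haN : ∀ k l, a (k + N) l = a k l) (haM : ∀ k l, a k (l + M) = a k l) :
    ∃ s t : ℝ, (∀ k l, a k l = s) ∧ (∀ k l, b k l = t) := by
  obtain ⟨s, hs⟩ := h.fst_eq_const_of_periodic hN hM (fun l k => haN k l) haM
  exact ⟨s, b 0 0, hs, h.snd_eq_const_of_fst_eq_const hs⟩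

end IsGridHarmonic

theorem constPair_injective : Injective constPair := fun _ _ hxy =>
  Prod.ext (congrFun (congrFun (congrArg Prod.fst hxy) 0) 0)
    (congrFun (congrFun (congrArg Prod.snd hxy) 0) 0)

theorem isGridHarmonic_constPair (st : ℝ × ℝ) :
    IsGridHarmonic (constPair st).1 (constPair st).2 := fun _ _ => by
  simp [constPair]

/-- A harmonic vector on the grid periodic with respect to a finite-index sublattice of `ℤ²`
is constant; consequently the space of such harmonic vectors is exactly the (2-dimensional)
space of constant pairs. -/
theorem sublattice_periodic_grid_harmonic_is_constant :
    (∀ a b : ℤ → ℤ → ℝ, IsGridHarmonic a b →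
      ∀ N M : ℤ, 1 ≤ N → 1 ≤ M →
        (∀ k l, a (k + N) l = a k l) → (∀ k l, a k (l + M) = a k l) →
        (∀ k l, b (k + N) l = b k l) → (∀ k l, b k (l + M) = b k l) →
        ∃ s t : ℝ, (∀ k l, a k l = s) ∧ (∀ k l, b k l = t)) ∧
    {w : (ℤ → ℤ → ℝ) × (ℤ → ℤ → ℝ) | IsGridHarmonic w.1 w.2 ∧
        ∃ N M : ℤ, 1 ≤ N ∧ 1 ≤ M ∧
          (∀ k l, w.1 (k + N) l = w.1 k l) ∧ (∀ k l, w.1 k (l + M) = w.1 k l) ∧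
          (∀ k l, w.2 (k + N) l = w.2 k l) ∧ (∀ k l, w.2 k (l + M) = w.2 k l)}
      = ↑(LinearMap.range constPair) ∧
    Module.rank ℝ ↥(LinearMap.range constPair) = 2 := by
  refine ⟨fun a b h N M hN hM haN haM _ _ => h.exists_const_of_fst_periodic hN hM haN haM,
    Set.ext fun w => ⟨?_, ?_⟩, ?_⟩
  · rintro ⟨h, N, M, hN, hM, haN, haM, -, -⟩
    obtain ⟨s, t, hs, ht⟩ := h.exists_const_of_fst_periodic hN hM haN haM
    exact ⟨(s, t), Prod.ext (funext₂ fun k l => (hs k l).symm) (funext₂ fun k l => (ht k l).symm)⟩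
  · rintro ⟨st, rfl⟩
    exact ⟨isGridHarmonic_constPair st, 1, 1, le_rfl, le_rfl, fun _ _ => rfl, fun _ _ => rfl,
      fun _ _ => rfl, fun _ _ => rfl⟩
  · rw [rank_range_of_injective constPair constPair_injective, rank_prod', Module.rank_self]
    norm_num
end

section
/- There exists a tiling of the plane ℝ² by axis-parallel squares (a family of closed axis-parallel squares with pairwise disjoint interiors whose union is all of ℝ²) in which the side lengths of the squares are pairwise distinct; moreover such a tiling exists in which the set of side lengths occurring is unbounded. -/
open Set

namespace TilingAux

/-- Moroń's 33×32 perfect squared rectangle: (x, y, side) of each of 9 squares. -/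
noncomputable def mdata : Fin 9 → ℝ × ℝ × ℝ
  | 0 => (0, 0, 18)
  | 1 => (18, 0, 15)
  | 2 => (0, 18, 14)
  | 3 => (14, 22, 10)
  | 4 => (24, 23, 9)
  | 5 => (25, 15, 8)
  | 6 => (18, 15, 7)
  | 7 => (14, 18, 4)
  | 8 => (24, 22, 1)

noncomputable def MS (i : Fin 9) : Set (ℝ × ℝ) :=
  Icc (mdata i).1 ((mdata i).1 + (mdata i).2.2) ×ˢ Icc (mdata i).2.1 ((mdata i).2.1 + (mdata i).2.2)

/-- The spiral rectangle data: (xl, xr, yl, yr). -/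
noncomputable def rect : ℕ → ℝ × ℝ × ℝ × ℝ
  | 0 => (0, 33, 0, 32)
  | n+1 =>
    let p := rect n
    if n % 4 = 0 then (p.1, p.2.1 + (p.2.2.2 - p.2.2.1), p.2.2.1, p.2.2.2)
    else if n % 4 = 1 then (p.1, p.2.1, p.2.2.1, p.2.2.2 + (p.2.1 - p.1))
    else if n % 4 = 2 then (p.1 - (p.2.2.2 - p.2.2.1), p.2.1, p.2.2.1, p.2.2.2)
    else (p.1, p.2.1, p.2.2.1 - (p.2.1 - p.1), p.2.2.2)

noncomputable def xl (n : ℕ) : ℝ := (rect n).1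
noncomputable def xr (n : ℕ) : ℝ := (rect n).2.1
noncomputable def yl (n : ℕ) : ℝ := (rect n).2.2.1
noncomputable def yr (n : ℕ) : ℝ := (rect n).2.2.2

noncomputable def R (n : ℕ) : Set (ℝ × ℝ) := Icc (xl n) (xr n) ×ˢ Icc (yl n) (yr n)

/-- the n-th spiral square -/
noncomputable def T (n : ℕ) : Set (ℝ × ℝ) :=
  if n % 4 = 0 then Icc (xr n) (xr n + (yr n - yl n)) ×ˢ Icc (yl n) (yr n)
  else if n % 4 = 1 then Icc (xl n) (xr n) ×ˢ Icc (yr n) (yr n + (xr n - xl n))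
  else if n % 4 = 2 then Icc (xl n - (yr n - yl n)) (xl n) ×ˢ Icc (yl n) (yr n)
  else Icc (xl n) (xr n) ×ˢ Icc (yl n - (xr n - xl n)) (yl n)

/-- the n-th spiral square's side -/
noncomputable def t (n : ℕ) : ℝ :=
  if n % 4 = 0 ∨ n % 4 = 2 then yr n - yl n else xr n - xl n

lemma mod4 (n : ℕ) : n % 4 = 0 ∨ n % 4 = 1 ∨ n % 4 = 2 ∨ n % 4 = 3 := by omega

lemma rect_succ0 {n : ℕ} (h : n % 4 = 0) :
    xl (n+1) = xl n ∧ xr (n+1) = xr n + (yr n - yl n) ∧ yl (n+1) = yl n ∧ yr (n+1) = yr n := by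
  simp [xl, xr, yl, yr, rect, h]

lemma rect_succ1 {n : ℕ} (h : n % 4 = 1) :
    xl (n+1) = xl n ∧ xr (n+1) = xr n ∧ yl (n+1) = yl n ∧ yr (n+1) = yr n + (xr n - xl n) := by
  simp [xl, xr, yl, yr, rect, h]

lemma rect_succ2 {n : ℕ} (h : n % 4 = 2) :
    xl (n+1) = xl n - (yr n - yl n) ∧ xr (n+1) = xr n ∧ yl (n+1) = yl n ∧ yr (n+1) = yr n := by
  simp [xl, xr, yl, yr, rect, h]

lemma rect_succ3 {n : ℕ} (h : n % 4 = 3) :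
    xl (n+1) = xl n ∧ xr (n+1) = xr n ∧ yl (n+1) = yl n - (xr n - xl n) ∧ yr (n+1) = yr n := by
  simp [xl, xr, yl, yr, rect, h]

lemma big (n : ℕ) : 32 ≤ xr n - xl n ∧ 32 ≤ yr n - yl n := by
  induction n with
  | zero => norm_num [xl, xr, yl, yr, rect]
  | succ n ih =>
    rcases mod4 n with h|h|h|h
    · obtain ⟨a,b,c,d⟩ := rect_succ0 h; rw [a,b,c,d]; constructor <;> linarith [ih.1, ih.2]
    · obtain ⟨a,b,c,d⟩ := rect_succ1 h; rw [a,b,c,d]; constructor <;> linarith [ih.1, ih.2]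
    · obtain ⟨a,b,c,d⟩ := rect_succ2 h; rw [a,b,c,d]; constructor <;> linarith [ih.1, ih.2]
    · obtain ⟨a,b,c,d⟩ := rect_succ3 h; rw [a,b,c,d]; constructor <;> linarith [ih.1, ih.2]

end TilingAux

namespace TilingAux

lemma R_succ (n : ℕ) : R (n+1) = R n ∪ T n := by
  have hb := big n
  rcases mod4 n with h|h|h|h
  · obtain ⟨a,b,c,d⟩ := rect_succ0 h
    rw [R, a, b, c, d, T, if_pos h,
      ← Icc_union_Icc_eq_Icc (a := xl n) (b := xr n) (c := xr n + (yr n - yl n))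
        (by linarith [hb.1]) (by linarith [hb.2]),
      union_prod]; rfl
  · obtain ⟨a,b,c,d⟩ := rect_succ1 h
    rw [R, a, b, c, d, T, if_neg (by omega), if_pos h,
      ← Icc_union_Icc_eq_Icc (a := yl n) (b := yr n) (c := yr n + (xr n - xl n))
        (by linarith [hb.2]) (by linarith [hb.1]),
      prod_union]; rfl
  · obtain ⟨a,b,c,d⟩ := rect_succ2 h
    rw [R, a, b, c, d, T, if_neg (by omega), if_neg (by omega), if_pos h,
      ← Icc_union_Icc_eq_Icc (a := xl n - (yr n - yl n)) (b := xl n) (c := xr n)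
        (by linarith [hb.2]) (by linarith [hb.1]),
      union_prod, union_comm]; rfl
  · obtain ⟨a,b,c,d⟩ := rect_succ3 h
    rw [R, a, b, c, d, T, if_neg (by omega), if_neg (by omega), if_neg (by omega),
      ← Icc_union_Icc_eq_Icc (a := yl n - (xr n - xl n)) (b := yl n) (c := yr n)
        (by linarith [hb.1]) (by linarith [hb.2]),
      prod_union, union_comm]; rfl

lemma R_mono : Monotone R := by
  apply monotone_nat_of_le_succ
  intro n; rw [R_succ]; exact subset_union_left

lemma T_subset (n : ℕ) : T n ⊆ R (n+1) := by
  rw [R_succ]; exact subset_union_right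

lemma int_T_disj_R (n : ℕ) : interior (T n) ∩ R n = ∅ := by
  rcases mod4 n with h|h|h|h <;>
    [rw [T, if_pos h]; rw [T, if_neg (by omega), if_pos h];
     rw [T, if_neg (by omega), if_neg (by omega), if_pos h];
     rw [T, if_neg (by omega), if_neg (by omega), if_neg (by omega)]] <;>
  · rw [interior_prod_eq, interior_Icc, interior_Icc]
    ext ⟨u, v⟩
    simp only [R, mem_inter_iff, mem_prod, mem_Ioo, mem_Icc, mem_empty_iff_false, iff_false,
      not_and]
    rintro ⟨⟨a1, a2⟩, b1, b2⟩ ⟨c1, c2⟩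
    intro d1
    linarith

end TilingAux

namespace TilingAux

lemma t_pos (n : ℕ) : 32 ≤ t n := by
  rw [t]; split <;> [exact (big n).2; exact (big n).1]

lemma t_succ (n : ℕ) : t (n+1) = (xr n - xl n) + (yr n - yl n) := by
  rcases mod4 n with h|h|h|h
  · obtain ⟨a,b,c,d⟩ := rect_succ0 h
    rw [t, if_neg (by omega), a, b]; ring
  · obtain ⟨a,b,c,d⟩ := rect_succ1 h
    rw [t, if_pos (by omega), c, d]; ring
  · obtain ⟨a,b,c,d⟩ := rect_succ2 h
    rw [t, if_neg (by omega), a, b]; ring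
  · obtain ⟨a,b,c,d⟩ := rect_succ3 h
    rw [t, if_pos (by omega), c, d]; ring

lemma t_lt_succ (n : ℕ) : t n + 32 ≤ t (n+1) := by
  rw [t_succ, t]
  have hb := big n
  split <;> linarith [hb.1, hb.2]

lemma t_strictMono : StrictMono t :=
  strictMono_nat_of_lt_succ fun n => by linarith [t_lt_succ n]

lemma t_lb (n : ℕ) : 32 * (n + 1 : ℝ) ≤ t n := by
  induction n with
  | zero => simpa using t_pos 0
  | succ n ih =>
    have := t_lt_succ n
    push_cast
    push_cast at ih
    linarith

-- coordinate monotonicity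
lemma xl_antitone : Antitone xl := by
  apply antitone_nat_of_succ_le
  intro n
  have hb := big n
  rcases mod4 n with h|h|h|h
  · rw [(rect_succ0 h).1]
  · rw [(rect_succ1 h).1]
  · rw [(rect_succ2 h).1]; linarith [hb.2]
  · rw [(rect_succ3 h).1]

lemma xr_monotone : Monotone xr := by
  apply monotone_nat_of_le_succ
  intro n
  have hb := big n
  rcases mod4 n with h|h|h|h
  · rw [(rect_succ0 h).2.1]; linarith [hb.2]
  · rw [(rect_succ1 h).2.1]
  · rw [(rect_succ2 h).2.1]
  · rw [(rect_succ3 h).2.1]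

lemma yl_antitone : Antitone yl := by
  apply antitone_nat_of_succ_le
  intro n
  have hb := big n
  rcases mod4 n with h|h|h|h
  · rw [(rect_succ0 h).2.2.1]
  · rw [(rect_succ1 h).2.2.1]
  · rw [(rect_succ2 h).2.2.1]
  · rw [(rect_succ3 h).2.2.1]; linarith [hb.1]

lemma yr_monotone : Monotone yr := by
  apply monotone_nat_of_le_succ
  intro n
  have hb := big n
  rcases mod4 n with h|h|h|h
  · rw [(rect_succ0 h).2.2.2]
  · rw [(rect_succ1 h).2.2.2]; linarith [hb.1]
  · rw [(rect_succ2 h).2.2.2]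
  · rw [(rect_succ3 h).2.2.2]

lemma grow (k : ℕ) : xl (4*(k+1)) ≤ xl (4*k) - 32 ∧ xr (4*k) + 32 ≤ xr (4*(k+1)) ∧
    yl (4*(k+1)) ≤ yl (4*k) - 32 ∧ yr (4*k) + 32 ≤ yr (4*(k+1)) := by
  set n := 4*k with hn
  have h0 : n % 4 = 0 := by omega
  have h1 : (n+1) % 4 = 1 := by omega
  have h2 : (n+2) % 4 = 2 := by omega
  have h3 : (n+3) % 4 = 3 := by omega
  have e4 : 4*(k+1) = n + 3 + 1 := by omega
  obtain ⟨a0,b0,c0,d0⟩ := rect_succ0 h0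
  obtain ⟨a1,b1,c1,d1⟩ := rect_succ1 h1
  obtain ⟨a2,b2,c2,d2⟩ := rect_succ2 h2
  obtain ⟨a3,b3,c3,d3⟩ := rect_succ3 h3
  simp only [show n+1+1 = n+2 by omega, show n+2+1 = n+3 by omega] at a1 b1 c1 d1 a2 b2 c2 d2
  rw [e4]
  have g0 := big n
  have g1 := big (n+1)
  have g2 := big (n+2)
  refine ⟨?_, ?_, ?_, ?_⟩
  · rw [a3, a2, a1, a0]; linarith [g2.2]
  · rw [b3, b2, b1, b0]; linarith [g0.2]
  · rw [c3, c2, c1, c0]; linarith [g2.1, a1, a0, b1, b0]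
  · rw [d3, d2, d1, d0]; linarith [g1.1, a0, b0]

end TilingAux

namespace TilingAux

lemma rect0 : xl 0 = 0 ∧ xr 0 = 33 ∧ yl 0 = 0 ∧ yr 0 = 32 := by
  norm_num [xl, xr, yl, yr, rect]

lemma coords_big (k : ℕ) : xl (4*k) ≤ -(32*k : ℝ) ∧ (32*k : ℝ) ≤ xr (4*k) ∧
    yl (4*k) ≤ -(32*k : ℝ) ∧ (32*k : ℝ) ≤ yr (4*k) := by
  induction k with
  | zero => norm_num [rect0.1, rect0.2.1, rect0.2.2.1, rect0.2.2.2]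
  | succ k ih =>
    have g := grow k
    push_cast
    push_cast at ih
    refine ⟨by linarith [g.1, ih.1], by linarith [g.2.1, ih.2.1],
      by linarith [g.2.2.1, ih.2.2.1], by linarith [g.2.2.2, ih.2.2.2]⟩

lemma exists_mem_R (p : ℝ × ℝ) : ∃ n, p ∈ R n := by
  obtain ⟨k, hk⟩ := exists_nat_gt ((|p.1| + |p.2|) / 32)
  refine ⟨4*k, ?_, ?_⟩ <;> rw [mem_Icc] <;>
  · have c := coords_big k
    have h1 := abs_le.mp (le_refl |p.1|)
    have h2 := abs_le.mp (le_refl |p.2|)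
    have hh : |p.1| + |p.2| < 32 * k := by
      rw [div_lt_iff₀ (by norm_num)] at hk; linarith
    constructor <;> linarith [c.1, c.2.1, c.2.2.1, c.2.2.2]

lemma R_eq_union (n : ℕ) : R n = R 0 ∪ ⋃ m ∈ Finset.range n, T m := by
  induction n with
  | zero => simp
  | succ n ih =>
    rw [R_succ, ih, Finset.range_add_one]
    simp only [Finset.mem_insert, iUnion_iUnion_eq_or_left]
    rw [union_assoc, union_comm (T n)]

end TilingAux

namespace TilingAux

lemma prod_int_disj {a b c d a' b' c' d' : ℝ}
    (h : b ≤ a' ∨ b' ≤ a ∨ d ≤ c' ∨ d' ≤ c) :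
    (Ioo a b ×ˢ Ioo c d) ∩ (Ioo a' b' ×ˢ Ioo c' d') = ∅ := by
  ext ⟨u, v⟩
  simp only [mem_inter_iff, mem_prod, mem_Ioo, mem_empty_iff_false, iff_false, not_and]
  rintro ⟨⟨h1, h2⟩, h3, h4⟩ ⟨h5, h6⟩ h7
  rcases h with h|h|h|h <;> intro <;> linarith

lemma mem_MS (i : Fin 9) {u v : ℝ} (h1 : (mdata i).1 ≤ u)
    (h2 : u ≤ (mdata i).1 + (mdata i).2.2) (h3 : (mdata i).2.1 ≤ v)
    (h4 : v ≤ (mdata i).2.1 + (mdata i).2.2) : (u, v) ∈ MS i :=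
  ⟨⟨h1, h2⟩, h3, h4⟩

lemma moron_disj (i j : Fin 9) (hij : i ≠ j) : interior (MS i) ∩ interior (MS j) = ∅ := by
  fin_cases i <;> fin_cases j <;> first
  | exact absurd rfl hij
  | (simp only [MS, interior_prod_eq, interior_Icc]
     apply prod_int_disj
     norm_num [mdata])

lemma moron_cover : R 0 = ⋃ i, MS i := by
  apply Subset.antisymm
  · rintro ⟨u, v⟩ hp
    rw [R, rect0.1, rect0.2.1, rect0.2.2.1, rect0.2.2.2, mem_prod, mem_Icc, mem_Icc] at hp
    obtain ⟨⟨hu0, hu1⟩, hv0, hv1⟩ := hp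
    rw [mem_iUnion]
    rcases le_total u 18 with h1 | h1
    · rcases le_total v 18 with h2 | h2
      · exact ⟨0, mem_MS 0 (by norm_num [mdata]; linarith) (by norm_num [mdata]; linarith)
          (by norm_num [mdata]; linarith) (by norm_num [mdata]; linarith)⟩
      · rcases le_total u 14 with h3 | h3
        · exact ⟨2, mem_MS 2 (by norm_num [mdata]; linarith) (by norm_num [mdata]; linarith)
            (by norm_num [mdata]; linarith) (by norm_num [mdata]; linarith)⟩
        · rcases le_total v 22 with h4 | h4
          · exact ⟨7, mem_MS 7 (by norm_num [mdata]; linarith) (by norm_num [mdata]; linarith)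
              (by norm_num [mdata]; linarith) (by norm_num [mdata]; linarith)⟩
          · exact ⟨3, mem_MS 3 (by norm_num [mdata]; linarith) (by norm_num [mdata]; linarith)
              (by norm_num [mdata]; linarith) (by norm_num [mdata]; linarith)⟩
    · rcases le_total v 15 with h2 | h2
      · exact ⟨1, mem_MS 1 (by norm_num [mdata]; linarith) (by norm_num [mdata]; linarith)
          (by norm_num [mdata]; linarith) (by norm_num [mdata]; linarith)⟩
      · rcases le_total u 24 with h3 | h3
        · rcases le_total v 22 with h4 | h4
          · exact ⟨6, mem_MS 6 (by norm_num [mdata]; linarith) (by norm_num [mdata]; linarith)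
              (by norm_num [mdata]; linarith) (by norm_num [mdata]; linarith)⟩
          · exact ⟨3, mem_MS 3 (by norm_num [mdata]; linarith) (by norm_num [mdata]; linarith)
              (by norm_num [mdata]; linarith) (by norm_num [mdata]; linarith)⟩
        · rcases le_total u 25 with h5 | h5
          · rcases le_total v 22 with h4 | h4
            · exact ⟨6, mem_MS 6 (by norm_num [mdata]; linarith) (by norm_num [mdata]; linarith)
                (by norm_num [mdata]; linarith) (by norm_num [mdata]; linarith)⟩
            · rcases le_total v 23 with h6 | h6
              · exact ⟨8, mem_MS 8 (by norm_num [mdata]; linarith)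
                  (by norm_num [mdata]; linarith) (by norm_num [mdata]; linarith)
                  (by norm_num [mdata]; linarith)⟩
              · exact ⟨4, mem_MS 4 (by norm_num [mdata]; linarith)
                  (by norm_num [mdata]; linarith) (by norm_num [mdata]; linarith)
                  (by norm_num [mdata]; linarith)⟩
          · rcases le_total v 23 with h6 | h6
            · exact ⟨5, mem_MS 5 (by norm_num [mdata]; linarith) (by norm_num [mdata]; linarith)
                (by norm_num [mdata]; linarith) (by norm_num [mdata]; linarith)⟩
            · exact ⟨4, mem_MS 4 (by norm_num [mdata]; linarith) (by norm_num [mdata]; linarith)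
                (by norm_num [mdata]; linarith) (by norm_num [mdata]; linarith)⟩
  · rw [iUnion_subset_iff]
    intro i
    rw [R, rect0.1, rect0.2.1, rect0.2.2.1, rect0.2.2.2]
    rintro ⟨u, v⟩ ⟨⟨a, b⟩, c, d⟩
    rw [mem_prod, mem_Icc, mem_Icc]
    fin_cases i <;> norm_num [mdata] at a b c d ⊢ <;> constructor <;> constructor <;> linarith

end TilingAux

namespace TilingAux

lemma MS_subset_R (k : Fin 9) (n : ℕ) : MS k ⊆ R n := by
  have h : MS k ⊆ R 0 := by rw [moron_cover]; exact subset_iUnion MS k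
  exact h.trans (R_mono (Nat.zero_le n))

lemma disj_T (n : ℕ) (A : Set (ℝ × ℝ)) (hA : A ⊆ R n) :
    interior (T n) ∩ interior A = ∅ := by
  apply eq_empty_of_subset_empty
  intro p hp
  rw [← int_T_disj_R n]
  exact ⟨hp.1, hA (interior_subset hp.2)⟩

lemma msides_le (k : Fin 9) : (mdata k).2.2 ≤ 18 := by fin_cases k <;> norm_num [mdata]

lemma msides_pos (k : Fin 9) : 0 < (mdata k).2.2 := by fin_cases k <;> norm_num [mdata]

lemma T_square (n : ℕ) :
    ∃ x y : ℝ, T n = Icc x (x + t n) ×ˢ Icc y (y + t n) := by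
  rcases mod4 n with h|h|h|h
  · refine ⟨xr n, yl n, ?_⟩
    rw [T, if_pos h, t, if_pos (Or.inl h)]
    congr 1
    rw [show yl n + (yr n - yl n) = yr n by ring]
  · refine ⟨xl n, yr n, ?_⟩
    rw [T, if_neg (by omega), if_pos h, t, if_neg (by omega)]
    congr 1
    rw [show xl n + (xr n - xl n) = xr n by ring]
  · refine ⟨xl n - (yr n - yl n), yl n, ?_⟩
    rw [T, if_neg (by omega), if_neg (by omega), if_pos h, t, if_pos (Or.inr h)]
    congr 1
    · rw [show xl n - (yr n - yl n) + (yr n - yl n) = xl n by ring]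
    · rw [show yl n + (yr n - yl n) = yr n by ring]
  · refine ⟨xl n, yl n - (xr n - xl n), ?_⟩
    rw [T, if_neg (by omega), if_neg (by omega), if_neg (by omega), t, if_neg (by omega)]
    congr 1
    · rw [show xl n + (xr n - xl n) = xr n by ring]
    · rw [show yl n - (xr n - xl n) + (xr n - xl n) = yl n by ring]

end TilingAux

open TilingAux

/-- There exists a tiling of the plane `ℝ²` by closed axis-parallel squares whose side lengths
are pairwise distinct; moreover such a tiling exists in which the set of side lengths occurring
is unbounded. -/
theorem exists_tiling_all_sides_distinct_unbounded :
    ∃ (ι : Type) (S : ι → Set (ℝ × ℝ)) (s : ι → ℝ),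
      (∀ i, 0 < s i ∧ ∃ x y : ℝ, S i = Set.Icc x (x + s i) ×ˢ Set.Icc y (y + s i)) ∧
      (∀ i j, i ≠ j → interior (S i) ∩ interior (S j) = ∅) ∧
      (⋃ i, S i) = Set.univ ∧
      (∀ i j, i ≠ j → s i ≠ s j) ∧
      ¬ BddAbove (Set.range s) := by
  refine ⟨Fin 9 ⊕ ℕ, Sum.elim MS T, Sum.elim (fun k => (mdata k).2.2) t, ?_, ?_, ?_, ?_, ?_⟩
  · rintro (k | n)
    · exact ⟨msides_pos k, (mdata k).1, (mdata k).2.1, rfl⟩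
    · exact ⟨show (0:ℝ) < t n by linarith [t_pos n], T_square n⟩
  · rintro (k | n) (j | m) hij
    · exact moron_disj k j (by simpa using hij)
    · rw [inter_comm]
      exact disj_T m _ (MS_subset_R k m)
    · exact disj_T n _ (MS_subset_R j n)
    · have hnm : n ≠ m := by simpa using hij
      rcases hnm.lt_or_gt with h | h
      · rw [inter_comm]
        exact disj_T m _ ((T_subset n).trans (R_mono h))
      · exact disj_T n _ ((T_subset m).trans (R_mono h))
  · apply eq_univ_of_forall
    intro p
    obtain ⟨n, hn⟩ := exists_mem_R p
    rw [R_eq_union] at hn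
    rw [mem_iUnion]
    rcases hn with hn | hn
    · rw [moron_cover, mem_iUnion] at hn
      obtain ⟨k, hk⟩ := hn
      exact ⟨Sum.inl k, hk⟩
    · rw [mem_iUnion] at hn
      obtain ⟨m, hm⟩ := hn
      rw [mem_iUnion] at hm
      obtain ⟨_, hm⟩ := hm
      exact ⟨Sum.inr m, hm⟩
  · rintro (k | n) (j | m) hij
    · have : k ≠ j := by simpa using hij
      fin_cases k <;> fin_cases j <;> first
        | exact absurd rfl this
        | norm_num [mdata]
    · have := msides_le k; have := t_pos m; simp only [Sum.elim_inl, Sum.elim_inr]; intro h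
      linarith
    · have := msides_le j; have := t_pos n; simp only [Sum.elim_inl, Sum.elim_inr]; intro h
      linarith
    · have hnm : n ≠ m := by simpa using hij
      simpa using t_strictMono.injective.ne hnm
  · rintro ⟨C, hC⟩
    obtain ⟨n, hn⟩ := exists_nat_gt (C / 32)
    have h1 : t n ≤ C := hC ⟨Sum.inr n, rfl⟩
    have h2 := t_lb n
    have h3 : C < 32 * n := by
      rw [div_lt_iff₀ (by norm_num)] at hn; linarith
    have : (0:ℝ) ≤ n := Nat.cast_nonneg n
    nlinarith
end
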